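/- arXiv:2104.11971 — 9 statements merged into one kernel-verified Lean document; each statement's English description precedes it below -/
import Mathlib

section
/- For every integer n ≥ 2 and every integer m with 0 ≤ m ≤ n−1, one has q_m ≥ q_{m+1} if and only if m + 1/2 < 2n/3. -/
/-!
Write `n = m + c + 1`. Differentiating the binomial distribution function in `p` and substituting
`p = (m + 1 - u) / n` shows that `q m - q (m + 1)` is a positive multiple of `J m c - 1`, where
`J m c = ∫₀¹ (1 - u / (m + 1)) ^ m * (1 + u / c) ^ c du` is `binomialGapIntegral m c`.
Since `k ↦ (1 - u / (k + 1)) ^ k` is decreasing for `0 ≤ u ≤ 1`, `J m c` is antitone in `m`,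
and it remains to show `J (2c) c ≥ 1` and `J (2c + 1) c < 1`. The terms of order `1 / c` cancel
in both, so the integrands are bounded by polynomials that are exact to second order: Bernoulli's
inequality from below, and `x ^ c ≤ exp (c (x - 1))` with `exp y ≤ 1 + y + y ^ 2` from above.
-/

open Finset intervalIntegral

noncomputable def binomialCDF (n m : ℕ) (p : ℝ) : ℝ :=
  ∑ k ∈ range (m + 1), (n.choose k : ℝ) * p ^ k * (1 - p) ^ (n - k)

theorem binomialCDF_succ (n m : ℕ) (p : ℝ) :
    binomialCDF n (m + 1) p
      = binomialCDF n m p + n.choose (m + 1) * p ^ (m + 1) * (1 - p) ^ (n - (m + 1)) :=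
  sum_range_succ _ _

theorem hasDerivAt_binomialCDF (n m : ℕ) (p : ℝ) :
    HasDerivAt (binomialCDF n m)
      (-((n - m : ℕ) * n.choose m * p ^ m * (1 - p) ^ (n - m - 1))) p := by
  have hsub : HasDerivAt (fun p : ℝ => 1 - p) (-1) p := (hasDerivAt_id p).const_sub 1
  induction m with
  | zero =>
    have h : binomialCDF n 0 = fun p => (1 - p) ^ n := by ext; simp [binomialCDF]
    simpa [h] using hsub.fun_pow n
  | succ m ih =>
    have hterm := ((hasDerivAt_pow (m + 1) p).const_mul (n.choose (m + 1) : ℝ)).fun_mul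
      (hsub.fun_pow (n - (m + 1)))
    have hchoose : (n.choose (m + 1) : ℝ) * (m + 1) = n.choose m * (n - m : ℕ) := by
      exact_mod_cast n.choose_succ_right_eq m
    rw [funext (binomialCDF_succ n m)]
    refine (ih.fun_add hterm).congr_deriv ?_
    rw [show n - m - 1 = n - (m + 1) by omega]
    push_cast
    linear_combination (p ^ m * (1 - p) ^ (n - (m + 1))) * hchoose

theorem binomialCDF_sub_binomialCDF (n m : ℕ) (a b : ℝ) :
    binomialCDF n m a - binomialCDF n m b
      = (n - m : ℕ) * n.choose m * ∫ p in a..b, p ^ m * (1 - p) ^ (n - m - 1) := by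
  have hftc := integral_eq_sub_of_hasDerivAt (fun p _ => hasDerivAt_binomialCDF n m p)
    ((by fun_prop : Continuous fun p : ℝ =>
      -((n - m : ℕ) * n.choose m * p ^ m * (1 - p) ^ (n - m - 1))).intervalIntegrable a b)
  simp only [integral_neg, mul_assoc, integral_const_mul] at hftc
  linear_combination hftc

/-- For `c = 0` the second factor is `1`, so the case `m = n - 1` needs no separate treatment. -/
noncomputable def binomialGapIntegral (m c : ℕ) : ℝ :=
  ∫ u in (0:ℝ)..1, (1 - u / (m + 1)) ^ m * (1 + u / c) ^ c

theorem integral_pow_mul_one_sub_pow_eq_binomialGapIntegral (n m c : ℕ)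
    (h : n = m + c + 1) :
    ∫ p in (m / n : ℝ)..(m + 1) / n, p ^ m * (1 - p) ^ c
      = ((m + 1) / n) ^ m * (c / n) ^ c / n * binomialGapIntegral m c := by
  have hn : (n : ℝ) = m + c + 1 := by exact_mod_cast h
  have hn0 : (n : ℝ) ≠ 0 := by rw [hn]; positivity
  have hsub := integral_comp_sub_div (fun p : ℝ => p ^ m * (1 - p) ^ c) (a := 0) (b := 1) hn0
    ((m + 1) / n)
  have hpt : ∀ u : ℝ, ((m + 1) / n - u / n) ^ m * (1 - ((m + 1) / n - u / n)) ^ c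
      = ((m + 1) / n) ^ m * (c / n) ^ c * ((1 - u / (m + 1)) ^ m * (1 + u / c) ^ c) := by
    intro u
    have h1 : (m + 1) / n - u / n = (m + 1) / n * (1 - u / (m + 1)) := by field_simp
    rcases Nat.eq_zero_or_pos c with rfl | hc
    · simp [h1, mul_pow]
    · have h2 : 1 - ((m + 1) / n - u / n) = c / n * (1 + u / c) := by field_simp; linarith
      rw [h2, h1, mul_pow, mul_pow]
      ring
  simp only [hpt, integral_const_mul, smul_eq_mul] at hsub
  rw [binomialGapIntegral, div_mul_eq_mul_div, hsub, zero_div, sub_zero,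
    show (m + 1 : ℝ) / n - 1 / n = m / n by ring]
  field_simp

theorem binomialCDF_sub_binomialCDF_succ (n m c : ℕ) (h : n = m + c + 1) :
    binomialCDF n m (m / n) - binomialCDF n (m + 1) ((m + 1 : ℕ) / n)
      = (c + 1) * n.choose m * ((m + 1) / n) ^ m * (c / n) ^ c / n
        * (binomialGapIntegral m c - 1) := by
  have hn : (n : ℝ) = m + c + 1 := by exact_mod_cast h
  have hn0 : (n : ℝ) ≠ 0 := by rw [hn]; positivity
  have hchoose : (n.choose (m + 1) : ℝ) * (m + 1) = n.choose m * (c + 1) := by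
    have := n.choose_succ_right_eq m
    rw [show n - m = c + 1 by omega] at this
    exact_mod_cast this
  have hp : 1 - (m + 1 : ℝ) / n = c / n := by field_simp; linarith
  rw [binomialCDF_succ, ← sub_sub, binomialCDF_sub_binomialCDF, Nat.cast_succ, hp,
    show n - m - 1 = c by omega, show n - (m + 1) = c by omega, show n - m = c + 1 by omega,
    integral_pow_mul_one_sub_pow_eq_binomialGapIntegral n m c h, pow_succ]
  push_cast
  linear_combination (-(((m + 1) / n : ℝ) ^ m * (c / n) ^ c / n)) * hchoose

theorem one_sub_div_pow_succ_le {u : ℝ} (h0 : 0 ≤ u) (h1 : u ≤ 1) (k : ℕ) :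
    (1 - u / (k + 1 + 1)) ^ (k + 1) ≤ (1 - u / (k + 1)) ^ k := by
  set a := 1 - u / (k + 1)
  set b := 1 - u / (k + 1 + 1)
  have hb : 0 < b := by
    simp only [b, sub_pos]; rw [div_lt_one (by positivity)]; linarith
  have hab : -1 ≤ a / b := by
    have : 0 ≤ a := by
      simp only [a, sub_nonneg]; rw [div_le_one (by positivity)]; linarith
    linarith [div_nonneg this hb.le]
  have hbern : b ≤ 1 + k * (a / b - 1) := by
    have key : b - b ^ 2 + k * (a - b)
        = u * (k + 2 - u * (k + 1)) / ((k + 1) * (k + 2) ^ 2) := by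
      simp only [a, b]; field_simp; ring
    have : 0 ≤ b - b ^ 2 + k * (a - b) := by
      rw [key]; exact div_nonneg (mul_nonneg h0 (by nlinarith)) (by positivity)
    rw [← sub_nonneg, show 1 + k * (a / b - 1) - b = (b - b ^ 2 + k * (a - b)) / b by
      field_simp; ring]
    positivity
  calc b ^ (k + 1) = b * b ^ k := pow_succ' b k
    _ ≤ (1 + k * (a / b - 1)) * b ^ k := by gcongr
    _ ≤ (a / b) ^ k * b ^ k := by gcongr; exact one_add_mul_sub_le_pow hab k
    _ = a ^ k := by rw [div_pow, div_mul_cancel₀ _ (pow_ne_zero k hb.ne')]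

theorem antitone_one_sub_div_succ_pow {u : ℝ} (h0 : 0 ≤ u) (h1 : u ≤ 1) :
    Antitone fun k : ℕ => (1 - u / (k + 1)) ^ k :=
  antitone_nat_of_succ_le fun k => by
    simpa only [Nat.cast_succ] using one_sub_div_pow_succ_le h0 h1 k

theorem binomialGapIntegral_antitone (c : ℕ) : Antitone fun m => binomialGapIntegral m c :=
  fun m m' hm => integral_mono_on zero_le_one
    ((by fun_prop : Continuous fun u : ℝ =>
      (1 - u / (m' + 1)) ^ m' * (1 + u / c) ^ c).intervalIntegrable _ _)
    ((by fun_prop : Continuous fun u : ℝ =>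
      (1 - u / (m + 1)) ^ m * (1 + u / c) ^ c).intervalIntegrable _ _)
    fun u ⟨hu0, hu1⟩ => mul_le_mul_of_nonneg_right (antitone_one_sub_div_succ_pow hu0 hu1 hm)
      (by positivity)

theorem integral_zero_one_sum_mul_pow {N : ℕ} (a : Fin N → ℝ) :
    ∫ u in (0:ℝ)..1, ∑ i, a i * u ^ (i : ℕ) = ∑ i, a i / ((i : ℕ) + 1) := by
  rw [integral_finsetSum fun i _ =>
    (by fun_prop : Continuous fun u : ℝ => a i * u ^ (i : ℕ)).intervalIntegrable _ _]
  simp [integral_pow, div_eq_mul_inv]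

theorem one_le_binomialGapIntegral_two_mul (c : ℕ) : 1 ≤ binomialGapIntegral (2 * c) c := by
  rcases Nat.eq_zero_or_pos c with rfl | hc
  · simp [binomialGapIntegral]
  obtain ⟨A, hA⟩ : ∃ A : ℝ, A = 2 * c + 1 := ⟨_, rfl⟩
  have hlower : ∀ u ∈ Set.Icc (0 : ℝ) 1,
      1 + (u - 3 / 2 * u ^ 2) / A + (u ^ 3 - u ^ 2 / 2) / A ^ 2
        ≤ (1 - u / ((2 * c : ℕ) + 1)) ^ (2 * c) * (1 + u / c) ^ c := by
    rintro u ⟨hu0, -⟩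
    have hψ : 0 ≤ (1 - u / A) ^ 2 * (1 + u / c) := by positivity
    rw [Nat.cast_mul, Nat.cast_two, ← hA, pow_mul, ← mul_pow]
    refine le_trans (le_of_eq ?_) (one_add_mul_sub_le_pow (by linarith) c)
    rw [hA]
    field_simp
    ring
  have hcubic : ∀ u : ℝ, 1 + (u - 3 / 2 * u ^ 2) / A + (u ^ 3 - u ^ 2 / 2) / A ^ 2
      = ∑ i, ![1, 1 / A, -3 / (2 * A) - 1 / (2 * A ^ 2), 1 / A ^ 2] i * u ^ (i : ℕ) := by
    intro u; simp [Fin.sum_univ_succ]; ring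
  calc (1 : ℝ) ≤ 1 + 1 / (12 * A ^ 2) := le_add_of_nonneg_right (by positivity)
    _ = ∫ u in (0:ℝ)..1, 1 + (u - 3 / 2 * u ^ 2) / A + (u ^ 3 - u ^ 2 / 2) / A ^ 2 := by
      simp only [hcubic, integral_zero_one_sum_mul_pow]
      simp [Fin.sum_univ_succ]
      ring
    _ ≤ binomialGapIntegral (2 * c) c := integral_mono_on zero_le_one
      ((by fun_prop : Continuous fun u : ℝ =>
        1 + (u - 3 / 2 * u ^ 2) / A + (u ^ 3 - u ^ 2 / 2) / A ^ 2).intervalIntegrable _ _)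
      ((by fun_prop : Continuous fun u : ℝ =>
        (1 - u / ((2 * c : ℕ) + 1)) ^ (2 * c) * (1 + u / c) ^ c).intervalIntegrable _ _) hlower

theorem binomialGapIntegral_two_mul_add_one_lt_one (c : ℕ) :
    binomialGapIntegral (2 * c + 1) c < 1 := by
  rcases Nat.eq_zero_or_pos c with rfl | hc
  · norm_num [binomialGapIntegral]
  obtain ⟨A, hA⟩ : ∃ A : ℝ, A = 2 * c + 2 := ⟨_, rfl⟩
  have hA4 : 4 ≤ A := by rw [hA]; linarith [(by exact_mod_cast hc : (1 : ℝ) ≤ c)]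
  have hupper : ∀ u ∈ Set.Icc (0 : ℝ) 1,
      (1 - u / ((2 * c + 1 : ℕ) + 1)) ^ (2 * c + 1) * (1 + u / c) ^ c
        ≤ (1 + (2 * u - 3 / 2 * u ^ 2) / A + ((2 * u - 3 / 2 * u ^ 2) / A) ^ 2)
          * (1 - u / A) := by
    rintro u ⟨hu0, hu1⟩
    set y := (2 * u - 3 / 2 * u ^ 2) / A
    set ψ := (1 - u / A) ^ 2 * (1 + u / c)
    have hy0 : 0 ≤ y := div_nonneg (by nlinarith) (by linarith)
    have hy1 : y ≤ 1 := by rw [div_le_one (by linarith)]; nlinarith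
    have hψ : c * (ψ - 1) ≤ y := by
      have : c * (ψ - 1) = y + (u ^ 3 - u ^ 2) / A ^ 2 := by
        simp only [ψ, y]; rw [hA]; field_simp; ring
      rw [this, add_le_iff_nonpos_right]
      exact div_nonpos_of_nonpos_of_nonneg (by nlinarith) (by positivity)
    have hexp : Real.exp y ≤ 1 + y + y ^ 2 := by
      have := (le_abs_self _).trans
        (Real.abs_exp_sub_one_sub_id_le (abs_le.2 ⟨by linarith, hy1⟩))
      linarith
    have hpow : ψ ^ c ≤ Real.exp y := calc
      ψ ^ c ≤ Real.exp (ψ - 1) ^ c :=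
        pow_le_pow_left₀ (by positivity) (by linarith [Real.add_one_le_exp (ψ - 1)]) c
      _ = Real.exp (c * (ψ - 1)) := (Real.exp_nat_mul _ c).symm
      _ ≤ Real.exp y := Real.exp_le_exp.2 hψ
    have hsplit : (1 - u / ((2 * c + 1 : ℕ) + 1)) ^ (2 * c + 1) * (1 + u / c) ^ c
        = ψ ^ c * (1 - u / A) := by
      rw [show ((2 * c + 1 : ℕ) : ℝ) + 1 = A by rw [hA]; push_cast; ring, pow_succ, pow_mul,
        mul_right_comm, ← mul_pow]
    rw [hsplit]
    exact mul_le_mul_of_nonneg_right (hpow.trans hexp)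
      (sub_nonneg.2 ((div_le_one (by linarith)).2 (by linarith)))
  have hquintic : ∀ u : ℝ,
      (1 + (2 * u - 3 / 2 * u ^ 2) / A + ((2 * u - 3 / 2 * u ^ 2) / A) ^ 2) * (1 - u / A)
        = ∑ i, ![1, 1 / A, -3 / (2 * A) + 2 / A ^ 2, -9 / (2 * A ^ 2) - 4 / A ^ 3,
            9 / (4 * A ^ 2) + 6 / A ^ 3, -9 / (4 * A ^ 3)] i * u ^ (i : ℕ) := by
    intro u; simp [Fin.sum_univ_succ]; ring
  calc binomialGapIntegral (2 * c + 1) c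
      ≤ ∫ u in (0:ℝ)..1,
          (1 + (2 * u - 3 / 2 * u ^ 2) / A + ((2 * u - 3 / 2 * u ^ 2) / A) ^ 2) * (1 - u / A) :=
      integral_mono_on zero_le_one
        ((by fun_prop : Continuous fun u : ℝ =>
          (1 - u / ((2 * c + 1 : ℕ) + 1)) ^ (2 * c + 1) * (1 + u / c) ^ c).intervalIntegrable _ _)
        ((by fun_prop : Continuous fun u : ℝ =>
          (1 + (2 * u - 3 / 2 * u ^ 2) / A + ((2 * u - 3 / 2 * u ^ 2) / A) ^ 2)
            * (1 - u / A)).intervalIntegrable _ _) hupper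
    _ = 1 - 1 / (120 * A ^ 2) - 7 / (40 * A ^ 3) := by
      simp only [hquintic, integral_zero_one_sum_mul_pow]
      simp [Fin.sum_univ_succ]
      ring
    _ < 1 := by
      have : 0 < A := by linarith
      have : 0 < 1 / (120 * A ^ 2) := by positivity
      have : 0 < 7 / (40 * A ^ 3) := by positivity
      linarith

theorem one_le_binomialGapIntegral_iff (m c : ℕ) :
    1 ≤ binomialGapIntegral m c ↔ m ≤ 2 * c := by
  refine ⟨fun h => ?_, fun h =>
    (one_le_binomialGapIntegral_two_mul c).trans (binomialGapIntegral_antitone c h)⟩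
  by_contra! hm
  exact (binomialGapIntegral_two_mul_add_one_lt_one c).not_ge
    (h.trans (binomialGapIntegral_antitone c hm))

/-- For every integer `n ≥ 2` and `0 ≤ m ≤ n-1`, one has `q m ≥ q (m+1)`
if and only if `m + 1/2 < 2n/3`, where `q m = P(B(n, m/n) ≤ m)`. -/
theorem chvatal_janson_monotonicity (n : ℕ) (hn : 2 ≤ n) (q : ℕ → ℝ)
    (hq : ∀ m, q m =
      ∑ k ∈ Finset.range (m + 1),
        (n.choose k : ℝ) * ((m : ℝ) / n) ^ k * (1 - (m : ℝ) / n) ^ (n - k)) :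
    ∀ m ≤ n - 1, (q m ≥ q (m + 1) ↔ (m : ℝ) + 1 / 2 < 2 * (n : ℝ) / 3) := by
  intro m hm
  obtain ⟨c, hc⟩ : ∃ c, n = m + c + 1 := ⟨n - 1 - m, by omega⟩
  have hq' : ∀ j, q j = binomialCDF n j (j / n) := hq
  have hn0 : (0 : ℝ) < n := by exact_mod_cast (by omega : 0 < n)
  have hK : (0 : ℝ) < (c + 1) * n.choose m * ((m + 1) / n) ^ m * (c / n) ^ c / n := by
    have : 0 < n.choose m := Nat.choose_pos (by omega)
    rcases Nat.eq_zero_or_pos c with rfl | hc' <;> positivity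
  rw [ge_iff_le, ← sub_nonneg, hq', hq', binomialCDF_sub_binomialCDF_succ n m c hc,
    mul_nonneg_iff_of_pos_left hK, sub_nonneg, one_le_binomialGapIntegral_iff, hc]
  push_cast
  constructor
  · intro h
    have : (m : ℝ) ≤ 2 * c := by exact_mod_cast h
    linarith
  · intro h
    by_contra! h'
    have : (2 * c + 1 : ℝ) ≤ m := by exact_mod_cast h'
    linarith
end

section
/- Let n ≥ 2 be an integer and let m be an integer with 0 ≤ m ≤ n−2. Then q_m ≥ q_{m+1} if and only if ∫_{m/n}^{(m+1)/n} x^{m+1} (1−x)^{n−m−2} dx ≥ b_m, where b_m = (m/n)^{m+1} (1 − m/n)^{n−m−1} / (n−m−1). -/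
/-!
The partial sums `B_j = ∑_{k ≤ j} b_{n,k}` of the Bernstein basis telescope under differentiation:
`B_j' = -n b_{n-1,j}`, i.e. `B_j'(t) = -(n-j) C(n,j) t^j (1-t)^(n-j-1)`. With `p = m/n` and
`a = (m+1)/n` one has `q_{m+1} = B_{m+1}(a)` and `q_m = B_{m+1}(p) - b_{n,m+1}(p)`, so integrating
`B_{m+1}'` over `[p, a]` gives
`q_m - q_{m+1} = C(n,m+1) ((n-m-1) ∫_p^a x^(m+1) (1-x)^(n-m-2) dx - p^(m+1) (1-p)^(n-m-1))`.
-/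

open Polynomial Finset

namespace bernsteinPolynomial

variable {R : Type*} [CommRing R]

theorem eval_eq (n ν : ℕ) (t : R) :
    (bernsteinPolynomial R n ν).eval t = n.choose ν * t ^ ν * (1 - t) ^ (n - ν) := by
  simp [bernsteinPolynomial]

theorem derivative_sum_range (n j : ℕ) :
    derivative (∑ ν ∈ range (j + 1), bernsteinPolynomial R n ν) =
      -n * bernsteinPolynomial R (n - 1) j := by
  induction j with
  | zero => simp [derivative_zero]
  | succ j ih =>
    rw [sum_range_succ, derivative_add, ih, derivative_succ]
    ring

end bernsteinPolynomial

theorem Nat.mul_choose_pred_eq (n j : ℕ) : n * (n - 1).choose j = n.choose j * (n - j) := by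
  cases n with
  | zero => simp
  | succ n => simpa [mul_comm] using Nat.choose_mul_succ_eq n j

theorem Polynomial.integral_eval_derivative (P : ℝ[X]) (a b : ℝ) :
    ∫ x in a..b, (derivative P).eval x = P.eval b - P.eval a :=
  intervalIntegral.integral_eq_sub_of_hasDerivAt (fun x _ => P.hasDerivAt x)
    ((derivative P).continuous.intervalIntegrable a b)

theorem sum_range_bernsteinPolynomial_eval_sub (n j : ℕ) (a b : ℝ) :
    (∑ ν ∈ range (j + 1), bernsteinPolynomial ℝ n ν).eval a -
        (∑ ν ∈ range (j + 1), bernsteinPolynomial ℝ n ν).eval b =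
      n.choose j * (n - j : ℕ) * ∫ x in a..b, x ^ j * (1 - x) ^ (n - j - 1) := by
  have hcoef : (n : ℝ) * (n - 1).choose j = n.choose j * (n - j : ℕ) := by
    exact_mod_cast Nat.mul_choose_pred_eq n j
  have hderiv : ∀ x : ℝ, (derivative (∑ ν ∈ range (j + 1), bernsteinPolynomial ℝ n ν)).eval x =
      -(n.choose j * (n - j : ℕ) * (x ^ j * (1 - x) ^ (n - j - 1))) := by
    intro x
    simp only [bernsteinPolynomial.derivative_sum_range, eval_mul, eval_neg, eval_natCast,
      bernsteinPolynomial.eval_eq]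
    rw [Nat.sub_right_comm, ← hcoef]
    ring
  rw [← intervalIntegral.integral_const_mul, ← neg_sub, ← integral_eval_derivative]
  simp only [hderiv, intervalIntegral.integral_neg, neg_neg]

/-- For `n ≥ 2` and `0 ≤ m ≤ n-2`, one has `q m ≥ q (m+1)` iff
`∫_{m/n}^{(m+1)/n} x^{m+1} (1-x)^{n-m-2} dx ≥ b_m`, where
`b_m = (m/n)^{m+1} (1-m/n)^{n-m-1} / (n-m-1)`. -/
theorem qm_ge_qm1_iff_integral (n : ℕ) (hn : 2 ≤ n) (q : ℕ → ℝ)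
    (hq : ∀ m, q m =
      ∑ k ∈ Finset.range (m + 1),
        (n.choose k : ℝ) * ((m : ℝ) / n) ^ k * (1 - (m : ℝ) / n) ^ (n - k)) :
    ∀ m ≤ n - 2,
      (q m ≥ q (m + 1) ↔
        (∫ x in ((m : ℝ) / n)..(((m : ℝ) + 1) / n),
            x ^ (m + 1) * (1 - x) ^ (n - m - 2)) ≥
          ((m : ℝ) / n) ^ (m + 1) * (1 - (m : ℝ) / n) ^ (n - m - 1) /
            ((n : ℝ) - m - 1)) := by
  intro m hm
  set p : ℝ := (m : ℝ) / n
  set a : ℝ := ((m : ℝ) + 1) / n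
  set I : ℝ := ∫ x in p..a, x ^ (m + 1) * (1 - x) ^ (n - m - 2)
  set B : ℝ[X] := ∑ ν ∈ range (m + 1 + 1), bernsteinPolynomial ℝ n ν
  have hqm : q m = B.eval p - n.choose (m + 1) * p ^ (m + 1) * (1 - p) ^ (n - m - 1) := by
    simp only [hq, B, sum_range_succ _ (m + 1), eval_add, eval_finsetSum,
      bernsteinPolynomial.eval_eq, Nat.sub_sub]
    ring
  have hqm1 : q (m + 1) = B.eval a := by
    simp only [hq, B, eval_finsetSum, bernsteinPolynomial.eval_eq]
    push_cast
    rfl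
  have hB := sum_range_bernsteinPolynomial_eval_sub n (m + 1) p a
  rw [show n - (m + 1) - 1 = n - m - 2 by omega, Nat.cast_sub (by omega)] at hB
  push_cast at hB
  have key : q m - q (m + 1) =
      n.choose (m + 1) * ((n - m - 1) * I - p ^ (m + 1) * (1 - p) ^ (n - m - 1)) := by
    rw [hqm, hqm1]
    linear_combination hB
  have hC : (0 : ℝ) < n.choose (m + 1) := by exact_mod_cast Nat.choose_pos (by omega)
  have hd : (0 : ℝ) < n - m - 1 := by
    rw [sub_sub, sub_pos]
    exact_mod_cast (by omega : m + 1 < n)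
  rw [ge_iff_le, ← sub_nonneg, key, mul_nonneg_iff_of_pos_left hC, sub_nonneg, ge_iff_le,
    div_le_iff₀ hd, mul_comm I]
end

section
/- Let n ≥ 3 be an integer and let v ∈ (0, 1] be a real number. Then the function g_v defined on the real interval [1, n−2] by g_v(x) = (1 − v/(x+1))^{x} (1 + v/(n−x−1))^{n−x−1} is strictly decreasing; in particular its derivative satisfies g_v′(x) < 0 for every x ∈ [1, n−2]. -/
/-!
Since both bases are positive, `g_v = exp ∘ F` with
`F x = x log (1 - v/(x+1)) + y log (1 + v/y)`, `y = n - x - 1`, so it suffices that `F' < 0`.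
Differentiating, `F' x = [log (1 - v/(x+1)) + x v/((x+1)(x+1-v))] - [log (1 + v/y) - v/(y+v)]`.
The first bracket is `≤ 0` because `log (1 - u) ≤ -u` and, as `v ≤ 1`,
`x v/((x+1)(x+1-v)) ≤ v/(x+1)`; the second is `> 0` because `log (1 + u) > u/(1+u)` for `u > 0`.
-/

open Real Filter Topology

theorem div_add_lt_log_one_add_div {c t : ℝ} (hc : 0 < c) (ht : 0 < t) :
    c / (t + c) < log (1 + c / t) :=
  calc c / (t + c) ≤ 2 * (c / t) / (c / t + 2) := by
        rw [div_le_div_iff₀ (by positivity) (by positivity)]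
        field_simp
        nlinarith
    _ < log (1 + c / t) := lt_log_one_add_of_pos (by positivity)

theorem log_one_sub_div_add_one_add_le {v x : ℝ} (hv₀ : 0 ≤ v) (hv₁ : v ≤ 1) (hvx : v < x + 1) :
    log (1 - v / (x + 1)) + x * v / ((x + 1) * (x + 1 - v)) ≤ 0 := by
  have hx : 0 < x + 1 := by linarith
  have hlog : log (1 - v / (x + 1)) ≤ -(v / (x + 1)) := by
    have := log_le_sub_one_of_pos (x := 1 - v / (x + 1)) (by rwa [sub_pos, div_lt_one hx])
    linarith
  have hfrac : x * v / ((x + 1) * (x + 1 - v)) ≤ v / (x + 1) := by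
    rw [div_le_div_iff₀ (by nlinarith) hx]
    nlinarith [mul_nonneg (mul_nonneg hv₀ hx.le) (sub_nonneg.2 hv₁)]
  linarith

theorem hasDerivAt_mul_log_one_add_div (c t : ℝ) (ht : t ≠ 0) (htc : t + c ≠ 0) :
    HasDerivAt (fun t ↦ t * log (1 + c / t)) (log (1 + c / t) - c / (t + c)) t := by
  have hbase : HasDerivAt (fun t ↦ 1 + c / t) (-c / t ^ 2) t :=
    (((hasDerivAt_const t c).div (hasDerivAt_id' t) ht).const_add 1).congr_deriv (by ring)
  have hbase_ne : 1 + c / t ≠ 0 := by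
    rwa [one_add_div ht, div_ne_zero_iff, and_iff_left ht]
  refine ((hasDerivAt_id' t).mul (hbase.log hbase_ne)).congr_deriv ?_
  field_simp
  ring

theorem hasDerivAt_mul_log_one_sub_div_add_one (v x : ℝ) (hx : x + 1 ≠ 0) (hxv : x + 1 - v ≠ 0) :
    HasDerivAt (fun x ↦ x * log (1 - v / (x + 1)))
      (log (1 - v / (x + 1)) + x * v / ((x + 1) * (x + 1 - v))) x := by
  have hbase : HasDerivAt (fun x ↦ 1 - v / (x + 1)) (v / (x + 1) ^ 2) x :=
    (((hasDerivAt_const x v).div ((hasDerivAt_id' x).add_const 1) hx).const_sub 1).congr_deriv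
      (by ring)
  have hbase_ne : 1 - v / (x + 1) ≠ 0 := by
    rwa [one_sub_div hx, div_ne_zero_iff, and_iff_left hx]
  refine ((hasDerivAt_id' x).mul (hbase.log hbase_ne)).congr_deriv ?_
  field_simp

section

noncomputable def gv (N v x : ℝ) : ℝ :=
  (1 - v / (x + 1)) ^ x * (1 + v / (N - x - 1)) ^ (N - x - 1)

noncomputable def logGv (N v x : ℝ) : ℝ :=
  x * log (1 - v / (x + 1)) + (N - x - 1) * log (1 + v / (N - x - 1))

noncomputable def logGvDeriv (N v x : ℝ) : ℝ :=
  (log (1 - v / (x + 1)) + x * v / ((x + 1) * (x + 1 - v))) -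
    (log (1 + v / (N - x - 1)) - v / (N - x - 1 + v))

variable {N v x : ℝ}

theorem gv_eq_exp_logGv (hv : 0 ≤ v) (hvx : v < x + 1) (hxN : 0 < N - x - 1) :
    gv N v x = exp (logGv N v x) := by
  have hA : 0 < 1 - v / (x + 1) := by rwa [sub_pos, div_lt_one (by linarith)]
  have hB : 0 < 1 + v / (N - x - 1) := by positivity
  rw [gv, logGv, rpow_def_of_pos hA, rpow_def_of_pos hB, ← exp_add, mul_comm x, mul_comm (N - x - 1)]

theorem gv_pos (hv : 0 ≤ v) (hvx : v < x + 1) (hxN : 0 < N - x - 1) : 0 < gv N v x := by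
  rw [gv_eq_exp_logGv hv hvx hxN]
  exact exp_pos _

theorem hasDerivAt_logGv (hx : x + 1 ≠ 0) (hxv : x + 1 - v ≠ 0) (hxN : N - x - 1 ≠ 0)
    (hxNv : N - x - 1 + v ≠ 0) : HasDerivAt (logGv N v) (logGvDeriv N v x) x := by
  have hy : HasDerivAt (fun x ↦ N - x - 1) (-1) x := ((hasDerivAt_id' x).const_sub N).sub_const 1
  refine ((hasDerivAt_mul_log_one_sub_div_add_one v x hx hxv).add
    ((hasDerivAt_mul_log_one_add_div v (N - x - 1) hxN hxNv).comp x hy)).congr_deriv ?_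
  rw [logGvDeriv]
  ring

theorem hasDerivAt_gv (hv : 0 ≤ v) (hvx : v < x + 1) (hxN : 0 < N - x - 1) :
    HasDerivAt (gv N v) (gv N v x * logGvDeriv N v x) x := by
  have hexp : gv N v =ᶠ[𝓝 x] fun y ↦ exp (logGv N v y) := by
    filter_upwards [Ioo_mem_nhds (show v - 1 < x by linarith) (show x < N - 1 by linarith)]
      with y hy
    exact gv_eq_exp_logGv hv (by linarith [hy.1]) (by linarith [hy.2])
  rw [gv_eq_exp_logGv hv hvx hxN]
  exact ((hasDerivAt_logGv (by linarith) (by linarith) hxN.ne' (by linarith)).exp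
    ).congr_of_eventuallyEq hexp

theorem logGvDeriv_neg (hv₀ : 0 < v) (hv₁ : v ≤ 1) (hvx : v < x + 1) (hxN : 0 < N - x - 1) :
    logGvDeriv N v x < 0 := by
  have h₁ := log_one_sub_div_add_one_add_le hv₀.le hv₁ hvx
  have h₂ := div_add_lt_log_one_add_div hv₀ hxN
  rw [logGvDeriv]
  linarith

end

open Real in
theorem gv_strictAntiOn_general (n : ℕ) (v : ℝ) (hv : v ∈ Set.Ioc (0:ℝ) 1)
    (g : ℝ → ℝ)
    (hg : ∀ x, g x = (1 - v / (x + 1)) ^ x * (1 + v / ((n : ℝ) - x - 1)) ^ ((n : ℝ) - x - 1)) :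
    StrictAntiOn g (Set.Icc (1:ℝ) ((n : ℝ) - 2)) ∧
      ∀ x ∈ Set.Icc (1:ℝ) ((n : ℝ) - 2), deriv g x < 0 := by
  obtain rfl : g = gv n v := funext hg
  obtain ⟨hv₀, hv₁⟩ := hv
  have key : ∀ x ∈ Set.Icc (1:ℝ) ((n : ℝ) - 2),
      HasDerivAt (gv n v) (gv n v x * logGvDeriv n v x) x ∧ gv n v x * logGvDeriv n v x < 0 := by
    rintro x ⟨hx₁, hx₂⟩
    have hvx : v < x + 1 := by linarith
    have hxN : 0 < (n : ℝ) - x - 1 := by linarith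
    exact ⟨hasDerivAt_gv hv₀.le hvx hxN,
      mul_neg_of_pos_of_neg (gv_pos hv₀.le hvx hxN) (logGvDeriv_neg hv₀ hv₁ hvx hxN)⟩
  refine ⟨strictAntiOn_of_hasDerivWithinAt_neg (convex_Icc _ _)
    (fun x hx ↦ (key x hx).1.continuousAt.continuousWithinAt)
    (fun x hx ↦ (key x (interior_subset hx)).1.hasDerivWithinAt)
    (fun x hx ↦ (key x (interior_subset hx)).2), fun x hx ↦ ?_⟩
  rw [(key x hx).1.deriv]
  exact (key x hx).2

open Real in
/-- For `n ≥ 3` and `v ∈ (0,1]`, the function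
`g_v(x) = (1 - v/(x+1))^x (1 + v/(n-x-1))^{n-x-1}` (real powers)
is strictly decreasing on `[1, n-2]`, and its derivative is negative there. -/
theorem gv_strictAntiOn (n : ℕ) (hn : 3 ≤ n) (v : ℝ) (hv : v ∈ Set.Ioc (0:ℝ) 1)
    (g : ℝ → ℝ)
    (hg : ∀ x, g x = (1 - v / (x + 1)) ^ x * (1 + v / ((n : ℝ) - x - 1)) ^ ((n : ℝ) - x - 1)) :
    StrictAntiOn g (Set.Icc (1:ℝ) ((n : ℝ) - 2)) ∧
      ∀ x ∈ Set.Icc (1:ℝ) ((n : ℝ) - 2), deriv g x < 0 :=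
  gv_strictAntiOn_general n v hv g hg
end

section
/- Let n ≥ 3 be an integer. Then the function h defined on the real interval [1, n−2] by h(x) = ∫_{0}^{1} (1 − v/(x+1))^{x} (1 + v/(n−x−1))^{n−x−1} dv is decreasing on [1, n−2]. -/
/-!
For fixed `v ∈ [0, 1]` the integrand is `exp (x * log (1 - v / (x + 1)) + s * log (1 + v / s))`
with `s = n - x - 1`. With `t = x + 1`, the first summand has derivative
`log (1 - v / t) + x v / (t (t - v)) ≤ -v / t + v / t`, by `log y ≤ y - 1` and `x ≤ t - v`.
The map `s ↦ s * log (1 + v / s)` has derivative `log (1 + v / s) - v / (s + v) ≥ 0`, by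
`log y ≥ 1 - 1 / y`, and `s` decreases with `x`. So the integrand is antitone in `x` for every
`v`, and hence so is the integral.
-/

open Real Set

namespace Real

lemma hasDerivAt_mul_log_one_add_div {v s : ℝ} (hs : 0 < s) (hsv : 0 < s + v) :
    HasDerivAt (fun s => s * log (1 + v / s)) (log (1 + v / s) - v / (s + v)) s := by
  have hbase : 1 + v / s ≠ 0 := by rw [one_add_div hs.ne']; positivity
  refine (hasDerivAt_id' s).fun_mul
    (((hasDerivAt_const s v).fun_div (hasDerivAt_id' s) hs.ne').const_add 1 |>.log hbase)
    |>.congr_deriv ?_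
  field_simp
  ring

lemma monotoneOn_mul_log_one_add_div {v : ℝ} (hv : 0 ≤ v) :
    MonotoneOn (fun s => s * log (1 + v / s)) (Ioi 0) := by
  have hderiv (s : ℝ) (hs : 0 < s) :=
    hasDerivAt_mul_log_one_add_div (v := v) hs (by linarith)
  refine monotoneOn_of_hasDerivWithinAt_nonneg (convex_Ioi 0)
    (fun s hs => (hderiv s hs).continuousAt.continuousWithinAt)
    (fun s hs => (hderiv s (interior_subset hs)).hasDerivWithinAt) fun s hs => ?_
  rw [interior_Ioi, mem_Ioi] at hs
  have hbase : 0 < 1 + v / s := by positivity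
  have hinv : 1 - (1 + v / s)⁻¹ = v / (s + v) := by field_simp; ring
  linarith [one_sub_inv_le_log_of_pos hbase]

lemma hasDerivAt_mul_log_one_sub_div_add_one {v x : ℝ} (hx : 0 < x + 1) (hxv : 0 < x + 1 - v) :
    HasDerivAt (fun x => x * log (1 - v / (x + 1)))
      (log (1 - v / (x + 1)) + x * v / ((x + 1) * (x + 1 - v))) x := by
  have hbase : 1 - v / (x + 1) ≠ 0 := by rw [one_sub_div hx.ne']; positivity
  refine (hasDerivAt_id' x).fun_mul
    (((hasDerivAt_const x v).fun_div ((hasDerivAt_id' x).add_const 1) hx.ne').const_sub 1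
      |>.log hbase) |>.congr_deriv ?_
  field_simp
  ring

lemma antitoneOn_mul_log_one_sub_div_add_one {v : ℝ} (hv₀ : 0 ≤ v) (hv₁ : v ≤ 1) :
    AntitoneOn (fun x => x * log (1 - v / (x + 1))) (Ioi 0) := by
  have hderiv (x : ℝ) (hx : 0 < x) :=
    hasDerivAt_mul_log_one_sub_div_add_one (v := v) (x := x) (by linarith) (by linarith)
  refine antitoneOn_of_hasDerivWithinAt_nonpos (convex_Ioi 0)
    (fun x hx => (hderiv x hx).continuousAt.continuousWithinAt)
    (fun x hx => (hderiv x (interior_subset hx)).hasDerivWithinAt) fun x hx => ?_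
  rw [interior_Ioi, mem_Ioi] at hx
  have hbase : 0 < 1 - v / (x + 1) := by
    rw [one_sub_div (by positivity)]; exact div_pos (by linarith) (by linarith)
  have hlog : log (1 - v / (x + 1)) ≤ -(v / (x + 1)) := by
    linarith [log_le_sub_one_of_pos hbase]
  have hfrac : x * v / ((x + 1) * (x + 1 - v)) ≤ v / (x + 1) := by
    rw [div_le_div_iff₀ (by nlinarith) (by linarith)]
    nlinarith [mul_nonneg (mul_nonneg hv₀ (by linarith : 0 ≤ x + 1)) (sub_nonneg.2 hv₁)]
  linarith

end Real

lemma antitoneOn_one_sub_div_rpow_mul_one_add_div_rpow (N : ℝ) {v : ℝ} (hv₀ : 0 ≤ v)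
    (hv₁ : v ≤ 1) :
    AntitoneOn (fun x : ℝ => (1 - v / (x + 1)) ^ x * (1 + v / (N - x - 1)) ^ (N - x - 1))
      (Ioo 0 (N - 1)) := by
  have hexp : EqOn (fun x : ℝ => (1 - v / (x + 1)) ^ x * (1 + v / (N - x - 1)) ^ (N - x - 1))
      (fun x => exp (x * log (1 - v / (x + 1)) + (N - x - 1) * log (1 + v / (N - x - 1))))
      (Ioo 0 (N - 1)) := by
    rintro x ⟨hx₀, hx₁⟩
    have h₁ : 0 < 1 - v / (x + 1) := by
      rw [one_sub_div (by positivity)]; exact div_pos (by linarith) (by linarith)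
    have h₂ : 0 < 1 + v / (N - x - 1) := by
      have : 0 < N - x - 1 := by linarith
      positivity
    simp only [rpow_def_of_pos h₁, rpow_def_of_pos h₂, ← exp_add, mul_comm (log _)]
  intro a ⟨ha₀, ha₁⟩ b ⟨hb₀, hb₁⟩ hab
  rw [hexp ⟨ha₀, ha₁⟩, hexp ⟨hb₀, hb₁⟩, exp_le_exp]
  gcongr ?_ + ?_
  · exact antitoneOn_mul_log_one_sub_div_add_one hv₀ hv₁ ha₀ hb₀ hab
  · exact monotoneOn_mul_log_one_add_div hv₀ (show 0 < N - b - 1 by linarith)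
      (show 0 < N - a - 1 by linarith) (by linarith)

lemma antitoneOn_integral_one_sub_div_rpow_mul_one_add_div_rpow (N : ℝ) :
    AntitoneOn (fun x : ℝ => ∫ v in (0:ℝ)..1,
      (1 - v / (x + 1)) ^ x * (1 + v / (N - x - 1)) ^ (N - x - 1)) (Ioo 0 (N - 1)) := by
  have hint {x : ℝ} (hx : x ∈ Ioo 0 (N - 1)) : IntervalIntegrable
      (fun v : ℝ => (1 - v / (x + 1)) ^ x * (1 + v / (N - x - 1)) ^ (N - x - 1))
      MeasureTheory.volume 0 1 := by
    refine Continuous.intervalIntegrable ?_ _ _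
    refine ((continuous_const.sub (continuous_id.div_const _)).rpow_const fun _ => ?_).mul
      ((continuous_const.add (continuous_id.div_const _)).rpow_const fun _ => ?_)
    all_goals exact Or.inr (by linarith [hx.1, hx.2])
  intro a ha b hb hab
  exact intervalIntegral.integral_mono_on zero_le_one (hint hb) (hint ha) fun v hv =>
    antitoneOn_one_sub_div_rpow_mul_one_add_div_rpow N hv.1 hv.2 ha hb hab

open Real in
theorem h_antitoneOn_general (n : ℕ) (h : ℝ → ℝ)
    (hh : ∀ x, h x = ∫ v in (0:ℝ)..1,
      (1 - v / (x + 1)) ^ x * (1 + v / ((n : ℝ) - x - 1)) ^ ((n : ℝ) - x - 1)) :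
    AntitoneOn h (Set.Icc (1:ℝ) ((n : ℝ) - 2)) := by
  rw [funext hh]
  exact (antitoneOn_integral_one_sub_div_rpow_mul_one_add_div_rpow n).mono
    fun x hx => ⟨by linarith [hx.1], by linarith [hx.2]⟩

open Real in
/-- For `n ≥ 3`, the function
`h(x) = ∫_0^1 (1 - v/(x+1))^x (1 + v/(n-x-1))^{n-x-1} dv` (real powers)
is decreasing on `[1, n-2]`. -/
theorem h_antitoneOn (n : ℕ) (hn : 3 ≤ n) (h : ℝ → ℝ)
    (hh : ∀ x, h x = ∫ v in (0:ℝ)..1,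
      (1 - v / (x + 1)) ^ x * (1 + v / ((n : ℝ) - x - 1)) ^ ((n : ℝ) - x - 1)) :
    AntitoneOn h (Set.Icc (1:ℝ) ((n : ℝ) - 2)) :=
  h_antitoneOn_general n h hh
end

section
/- For every integer s ≥ 1, ∫_{0}^{1} (1 − v/(2s))^{2s−1} (1 + v/s)^{s} dv ≥ 1 + 5/(96 s²) − 1/(80 s³) + 1/(96 s⁴); in particular this integral is strictly greater than 1. -/
/-!
With `x = v / (2s)` the integrand is `(1 - x)^(2s-1) (1 + 2x)^s = (1 - u)^s / (1 - x)`, where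
`u = 3x² - 2x³`, because `(1 - x)² (1 + 2x) = 1 - u`. For `u ≤ 1` the power `(1 - u)^s` dominates
its third Bonferroni truncation `1 - s u + C(s,2) u² - C(s,3) u³`, and `1 / (1 - x)` dominates
`1 + x + x² + x³`. Since `s x ≤ 1/2`, the truncation (slightly weakened to a polynomial of degree 6
in `x`) stays nonnegative, so the product of the two lower bounds is a polynomial minorant of the
integrand. Its integral is the claimed bound plus a rational function of `s` that is nonnegative
for `s ≥ 1`.
-/

open intervalIntegral Finset

theorem Nat.cast_choose_three {K : Type*} [Field K] [CharZero K] (n : ℕ) :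
    (n.choose 3 : K) = n * (n - 1) * (n - 2) / 6 := by
  induction n with
  | zero => simp
  | succ n ih => rw [Nat.choose_succ_succ', Nat.cast_add, ih, Nat.cast_choose_two]; push_cast; ring

theorem bonferroni_le_one_sub_pow (n : ℕ) {u : ℝ} (hu : u ≤ 1) :
    1 - n * u + n.choose 2 * u ^ 2 - n.choose 3 * u ^ 3 ≤ (1 - u) ^ n := by
  induction n with
  | zero => simp
  | succ n ih =>
    have hstep : 1 - (n + 1 : ℕ) * u + (n + 1).choose 2 * u ^ 2 - (n + 1).choose 3 * u ^ 3 =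
        (1 - u) * (1 - n * u + n.choose 2 * u ^ 2 - n.choose 3 * u ^ 3) - n.choose 3 * u ^ 4 := by
      simp only [Nat.choose_succ_succ', Nat.choose_one_right]
      push_cast
      ring
    rw [hstep, pow_succ' (1 - u)]
    have hmul := mul_le_mul_of_nonneg_left ih (sub_nonneg.2 hu)
    have hrem : (0 : ℝ) ≤ n.choose 3 * u ^ 4 := by positivity
    linarith

theorem integral_sum_mul_pow {n : ℕ} (c : Fin n → ℝ) (b : ℝ) :
    ∫ x in (0:ℝ)..b, ∑ k, c k * x ^ (k : ℕ) = ∑ k, c k * b ^ ((k : ℕ) + 1) / ((k : ℕ) + 1) := by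
  rw [integral_finsetSum fun k _ =>
    (by fun_prop : Continuous fun x : ℝ => c k * x ^ (k : ℕ)).intervalIntegrable _ _]
  refine sum_congr rfl fun k _ => ?_
  rw [integral_const_mul, integral_pow]
  simp [mul_div_assoc]

/-- The lower bound `1 - s u + C(s,2) u² - C(s,3) u³` at `u = 3x² - 2x³`, with the `4x⁶` term of
`u²` dropped and `u³` replaced by `27x⁶`. -/
def truncBonferroni (s : ℕ) (x : ℝ) : ℝ :=
  1 - 3 * s * x ^ 2 + 2 * s * x ^ 3 + 9 * s.choose 2 * x ^ 4 - 12 * s.choose 2 * x ^ 5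
    - 27 * s.choose 3 * x ^ 6

def minorant (s : ℕ) (x : ℝ) : ℝ :=
  truncBonferroni s x * (1 + x + x ^ 2 + x ^ 3)

theorem truncBonferroni_nonneg {s : ℕ} (hs : 1 ≤ s) {x : ℝ} (hx : 0 ≤ x) (hsx : s * x ≤ 1 / 2) :
    0 ≤ truncBonferroni s x := by
  have hs' : (1 : ℝ) ≤ s := by exact_mod_cast hs
  have hx2 : x ≤ 1 / 2 := by nlinarith
  have hsx0 : 0 ≤ (s : ℝ) * x := by positivity
  have hC2 : (s.choose 2 : ℝ) * x ^ 5 ≤ (s * x) ^ 2 * x ^ 3 / 2 :=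
    calc (s.choose 2 : ℝ) * x ^ 5 ≤ s ^ 2 / (Nat.factorial 2 : ℕ) * x ^ 5 :=
          mul_le_mul_of_nonneg_right (Nat.choose_le_pow_div 2 s) (by positivity)
      _ = (s * x) ^ 2 * x ^ 3 / 2 := by simp only [Nat.factorial]; push_cast; ring
  have hC3 : (s.choose 3 : ℝ) * x ^ 6 ≤ (s * x) ^ 3 * x ^ 3 / 6 :=
    calc (s.choose 3 : ℝ) * x ^ 6 ≤ s ^ 3 / (Nat.factorial 3 : ℕ) * x ^ 6 :=
          mul_le_mul_of_nonneg_right (Nat.choose_le_pow_div 3 s) (by positivity)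
      _ = (s * x) ^ 3 * x ^ 3 / 6 := by simp only [Nat.factorial]; push_cast; ring
  have h1 : s * x * x * (3 - 2 * x) ≤ 1 / 2 := by nlinarith [mul_nonneg (sub_nonneg.2 hx2) hx]
  have h2 : (s * x) ^ 2 * x ^ 3 ≤ (1 / 2) ^ 2 * (1 / 2) ^ 3 :=
    mul_le_mul (pow_le_pow_left₀ hsx0 hsx 2) (pow_le_pow_left₀ hx hx2 3) (by positivity)
      (by positivity)
  have h3 : (s * x) ^ 3 * x ^ 3 ≤ (1 / 2) ^ 3 * (1 / 2) ^ 3 :=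
    mul_le_mul (pow_le_pow_left₀ hsx0 hsx 3) (pow_le_pow_left₀ hx hx2 3) (by positivity)
      (by positivity)
  have h4 : (0 : ℝ) ≤ s.choose 2 * x ^ 4 := by positivity
  unfold truncBonferroni
  linarith

theorem truncBonferroni_le {s : ℕ} {x : ℝ} (hx : 0 ≤ x) :
    truncBonferroni s x ≤
      1 - s * (3 * x ^ 2 - 2 * x ^ 3) + s.choose 2 * (3 * x ^ 2 - 2 * x ^ 3) ^ 2
        - s.choose 3 * (3 * x ^ 2 - 2 * x ^ 3) ^ 3 := by
  have hu : (3 * x ^ 2 - 2 * x ^ 3) ^ 3 ≤ (3 * x ^ 2) ^ 3 :=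
    (Odd.pow_le_pow (by decide)).2 (by nlinarith [pow_nonneg hx 3])
  have h2 : (0 : ℝ) ≤ s.choose 2 * (4 * x ^ 6) := by positivity
  have h3 : (0 : ℝ) ≤ s.choose 3 * ((3 * x ^ 2) ^ 3 - (3 * x ^ 2 - 2 * x ^ 3) ^ 3) :=
    mul_nonneg (by positivity) (sub_nonneg.2 hu)
  unfold truncBonferroni
  linarith

theorem minorant_le {s : ℕ} (hs : 1 ≤ s) {x : ℝ} (hx : 0 ≤ x) (hsx : s * x ≤ 1 / 2) :
    minorant s x ≤ (1 - x) ^ (2 * s - 1) * (1 + 2 * x) ^ s := by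
  have hs' : (1 : ℝ) ≤ s := by exact_mod_cast hs
  have hx1 : 0 < 1 - x := by nlinarith
  have hfactor : (1 - x) ^ (2 * s - 1) * (1 + 2 * x) ^ s * (1 - x) =
      (1 - (3 * x ^ 2 - 2 * x ^ 3)) ^ s := by
    rw [mul_right_comm, ← pow_succ, Nat.sub_add_cancel (by omega), pow_mul, ← mul_pow]
    ring
  have hgeom : (1 + x + x ^ 2 + x ^ 3) * (1 - x) ≤ 1 := by nlinarith [pow_nonneg hx 4]
  have hP := truncBonferroni_nonneg hs hx hsx
  have hB := bonferroni_le_one_sub_pow s (u := 3 * x ^ 2 - 2 * x ^ 3) (by nlinarith)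
  refine le_of_mul_le_mul_right ?_ hx1
  rw [hfactor]
  calc minorant s x * (1 - x) = truncBonferroni s x * ((1 + x + x ^ 2 + x ^ 3) * (1 - x)) := by
        rw [minorant, mul_assoc]
    _ ≤ truncBonferroni s x := mul_le_of_le_one_right hP hgeom
    _ ≤ _ := (truncBonferroni_le hx).trans hB

theorem integral_minorant {s : ℕ} (hs : s ≠ 0) :
    ∫ v in (0:ℝ)..1, minorant s (v / (2 * s)) =
      1 + 5 / (96 * (s : ℝ) ^ 2) - 1 / (80 * (s : ℝ) ^ 3) + 1 / (96 * (s : ℝ) ^ 4) +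
        (72576 * (s : ℝ) ^ 6 - 55296 * s ^ 5 + 18810 * s ^ 4 - 3240 * s ^ 3 - 6384 * s ^ 2
          + 1722 * s - 2268) / (1290240 * s ^ 8) := by
  have hs0 : (s : ℝ) ≠ 0 := Nat.cast_ne_zero.2 hs
  set C2 : ℝ := (s.choose 2 : ℝ)
  set C3 : ℝ := (s.choose 3 : ℝ)
  have hcoeff : ∀ x, minorant s x = ∑ k : Fin 10,
      ![(1 : ℝ), 1, 1 - 3 * s, 1 - s, 9 * C2 - s, -s - 3 * C2, 2 * s - 3 * C2 - 27 * C3,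
        -3 * C2 - 27 * C3, -12 * C2 - 27 * C3, -27 * C3] k * x ^ (k : ℕ) := by
    intro x
    simp only [minorant, truncBonferroni, Fin.sum_univ_succ, Fin.sum_univ_zero,
      Matrix.cons_val_zero, Matrix.cons_val_succ, Fin.val_zero, Fin.val_succ]
    ring
  rw [integral_comp_div (minorant s) (by positivity), zero_div, smul_eq_mul]
  simp_rw [hcoeff]
  rw [integral_sum_mul_pow]
  simp only [C2, C3, Nat.cast_choose_two, Nat.cast_choose_three, Fin.sum_univ_succ,
    Fin.sum_univ_zero, Matrix.cons_val_zero, Matrix.cons_val_succ, Fin.val_zero, Fin.val_succ]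
  push_cast
  field_simp
  ring

/-- For every integer `s ≥ 1`,
`∫_0^1 (1 - v/(2s))^{2s-1} (1 + v/s)^s dv ≥ 1 + 5/(96 s²) - 1/(80 s³) + 1/(96 s⁴)`,
and in particular the integral is strictly greater than `1`. -/
theorem integral_r0_first (s : ℕ) (hs : 1 ≤ s) :
    (∫ v in (0:ℝ)..1, (1 - v / (2 * (s : ℝ))) ^ (2 * s - 1) * (1 + v / (s : ℝ)) ^ s)
        ≥ 1 + 5 / (96 * (s : ℝ) ^ 2) - 1 / (80 * (s : ℝ) ^ 3) + 1 / (96 * (s : ℝ) ^ 4) ∧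
      (∫ v in (0:ℝ)..1, (1 - v / (2 * (s : ℝ))) ^ (2 * s - 1) * (1 + v / (s : ℝ)) ^ s) > 1 := by
  have hs' : (1 : ℝ) ≤ s := by exact_mod_cast hs
  have hmono : ∫ v in (0:ℝ)..1, minorant s (v / (2 * s)) ≤
      ∫ v in (0:ℝ)..1, (1 - v / (2 * (s : ℝ))) ^ (2 * s - 1) * (1 + v / (s : ℝ)) ^ s := by
    refine integral_mono_on zero_le_one
      (Continuous.intervalIntegrable (by unfold minorant truncBonferroni; fun_prop) _ _)
      (Continuous.intervalIntegrable (by fun_prop) _ _) fun v ⟨hv0, hv1⟩ => ?_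
    have hsv : (s : ℝ) * (v / (2 * s)) ≤ 1 / 2 := by field_simp; linarith
    have h := minorant_le hs (by positivity) hsv
    rwa [show 1 + 2 * (v / (2 * s)) = 1 + v / s by field_simp] at h
  rw [integral_minorant (by omega)] at hmono
  have hrem : 0 ≤ (72576 * (s : ℝ) ^ 6 - 55296 * s ^ 5 + 18810 * s ^ 4 - 3240 * s ^ 3
      - 6384 * s ^ 2 + 1722 * s - 2268) / (1290240 * s ^ 8) := by
    refine div_nonneg ?_ (by positivity)
    linarith [pow_le_pow_right₀ hs' (show 5 ≤ 6 by norm_num),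
      pow_le_pow_right₀ hs' (show 3 ≤ 6 by norm_num),
      pow_le_pow_right₀ hs' (show 2 ≤ 6 by norm_num),
      pow_le_pow_right₀ hs' (show 1 ≤ 6 by norm_num), one_le_pow₀ (n := 6) hs',
      pow_nonneg (zero_le_one.trans hs') 4]
  have hgain : 0 < 5 / (96 * (s : ℝ) ^ 2) - 1 / (80 * (s : ℝ) ^ 3) + 1 / (96 * (s : ℝ) ^ 4) := by
    rw [show 5 / (96 * (s : ℝ) ^ 2) - 1 / (80 * (s : ℝ) ^ 3) + 1 / (96 * (s : ℝ) ^ 4) =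
      (50 * s ^ 2 - 12 * s + 10) / (960 * s ^ 4) by field_simp; ring]
    exact div_pos (by nlinarith) (by positivity)
  constructor <;> linarith
end

section
/- For every integer s ≥ 2, the integral I_s = ∫_{0}^{1} (1 − v/(2s+1))^{2s} (1 + v/(s−1))^{s−1} dv satisfies I_s < 1. -/
/-!
Write `w = 1 - v/a`, `u = 1 + v/b` with `a = 2s + 1`, `b = s - 1`. For any `P`, the derivative of
`G = -w^a u^b P` is `w^(a-1) u^(b-1) ((u - w) P - w u P')`, so if `P` is a supersolution of the linear
ODE `w u P' = (u - w) P - u` on `[0, 1]` then `G'` dominates the integrand, and if moreover `P 1 ≥ 0`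
then `I_s ≤ G 1 - G 0 ≤ P 0`.

The terms of order `1/s` cancel in `I_s - 1 ≈ -0.14/s²`, so `P` has to be accurate: we take the
degree-7 Taylor polynomial at `0` of the solution with `P 0 = 1 - 1/(50 b²)`. Its defect is
`v^7 (8 p₈ + c p₇ v)`, and the required signs are polynomial inequalities in `b` whose coefficients
all become positive after substituting `b = t + 2`. The case `s = 2` is a direct computation.
-/

open Finset Set intervalIntegral

theorem integral_le_of_supersolution (a b : ℝ) (m n : ℕ) (ha : a = m + 1) (hb : b = n + 1)
    {P P' : ℝ → ℝ} (hP : ∀ v, HasDerivAt P (P' v) v)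
    (hsuper : ∀ v ∈ Ioo (0 : ℝ) 1,
      1 + v / b ≤ (v / a + v / b) * P v - (1 - v / a) * (1 + v / b) * P' v)
    (h₁ : 0 ≤ P 1) :
    ∫ v in (0 : ℝ)..1, (1 - v / a) ^ m * (1 + v / b) ^ (n + 1) ≤ P 0 := by
  have ha₀ : a ≠ 0 := by rw [ha]; positivity
  have hb₀ : b ≠ 0 := by rw [hb]; positivity
  have hw_nonneg : ∀ v ≤ 1, 0 ≤ 1 - v / a := fun v hv => by
    rw [sub_nonneg, div_le_one (by rw [ha]; positivity), ha]
    linarith [(Nat.cast_nonneg m : (0 : ℝ) ≤ m)]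
  have hu_nonneg : ∀ v, 0 ≤ v → 0 ≤ 1 + v / b := fun v hv => by rw [hb]; positivity
  have hw : ∀ v, HasDerivAt (fun v => (1 - v / a) ^ (m + 1)) (-(1 - v / a) ^ m) v := fun v => by
    refine ((((hasDerivAt_id v).div_const a).const_sub 1).pow (m + 1)).congr_deriv ?_
    simp only [id, Nat.add_sub_cancel]
    push_cast
    rw [← ha]
    field_simp
  have hu : ∀ v, HasDerivAt (fun v => (1 + v / b) ^ (n + 1)) ((1 + v / b) ^ n) v := fun v => by
    refine ((((hasDerivAt_id v).div_const b).const_add 1).pow (n + 1)).congr_deriv ?_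
    simp only [id, Nat.add_sub_cancel]
    push_cast
    rw [← hb]
    field_simp
  set G := fun v => -((1 - v / a) ^ (m + 1) * (1 + v / b) ^ (n + 1) * P v)
  have hG : ∀ v, HasDerivAt G ((1 - v / a) ^ m * (1 + v / b) ^ n *
      ((v / a + v / b) * P v - (1 - v / a) * (1 + v / b) * P' v)) v := fun v => by
    refine (((hw v).mul (hu v)).mul (hP v)).neg.congr_deriv ?_
    simp only [Pi.mul_apply]
    ring
  have hG_cont : Continuous G := continuous_iff_continuousAt.2 fun v => (hG v).continuousAt
  calc ∫ v in (0 : ℝ)..1, (1 - v / a) ^ m * (1 + v / b) ^ (n + 1)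
      ≤ G 1 - G 0 := by
        refine integral_le_sub_of_hasDeriv_right_of_le zero_le_one hG_cont.continuousOn
          (fun v _ => (hG v).hasDerivWithinAt) (Continuous.integrableOn_Icc (by fun_prop))
          fun v hv => ?_
        have := hw_nonneg v hv.2.le
        have := hu_nonneg v hv.1.le
        rw [pow_succ, ← mul_assoc]
        exact mul_le_mul_of_nonneg_left (hsuper v hv) (by positivity)
    _ ≤ P 0 := by
        have := hw_nonneg 1 le_rfl
        have := hu_nonneg 1 zero_le_one
        have : 0 ≤ (1 - 1 / a) ^ (m + 1) * (1 + 1 / b) ^ (n + 1) * P 1 := by positivity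
        simp only [G, zero_div, sub_zero, add_zero, one_pow, one_mul]
        linarith

/-- Taylor coefficients at `0` of the solution of
`(1 - v/a) (1 + v/b) P' = (v/a + v/b) P - (1 + v/b)` with `P 0 = p₀`. -/
noncomputable def odeCoeff (a b p₀ : ℝ) : ℕ → ℝ
  | 0 => p₀
  | 1 => -1
  | 2 => ((a + b) * p₀ - b) / (2 * a * b)
  | n + 3 => ((a + b + n + 1) * odeCoeff a b p₀ (n + 1)
      - (a - b) * (n + 2) * odeCoeff a b p₀ (n + 2)) / ((n + 3) * a * b)

noncomputable def odePoly (a b p₀ : ℝ) (d : ℕ) (v : ℝ) : ℝ :=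
  ∑ k ∈ range (d + 1), odeCoeff a b p₀ k * v ^ k

noncomputable def odePolyDeriv (a b p₀ : ℝ) (d : ℕ) (v : ℝ) : ℝ :=
  ∑ k ∈ range (d + 1), odeCoeff a b p₀ k * (k * v ^ (k - 1))

section
variable {a b : ℝ} (p₀ : ℝ)

theorem hasDerivAt_odePoly (d : ℕ) (v : ℝ) :
    HasDerivAt (odePoly a b p₀ d) (odePolyDeriv a b p₀ d v) v := by
  unfold odePoly odePolyDeriv
  exact HasDerivAt.fun_sum fun k _ => (hasDerivAt_pow k v).const_mul _

theorem odeCoeff_add_three (ha : a ≠ 0) (hb : b ≠ 0) (n : ℕ) :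
    (n + 3) * a * b * odeCoeff a b p₀ (n + 3) =
      (a + b + n + 1) * odeCoeff a b p₀ (n + 1) - (a - b) * (n + 2) * odeCoeff a b p₀ (n + 2) := by
  rw [odeCoeff]
  field_simp

theorem odePoly_residual (ha : a ≠ 0) (hb : b ≠ 0) (k : ℕ) (v : ℝ) :
    (v / a + v / b) * odePoly a b p₀ (k + 1) v
      - (1 - v / a) * (1 + v / b) * odePolyDeriv a b p₀ (k + 1) v - (1 + v / b) =
    v ^ (k + 1) * ((k + 2) * odeCoeff a b p₀ (k + 2)
      + (a + b + k + 1) / (a * b) * odeCoeff a b p₀ (k + 1) * v) := by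
  induction k with
  | zero =>
    simp only [odePoly, odePolyDeriv, sum_range_succ, range_one, sum_singleton, odeCoeff]
    field_simp
    ring
  | succ k ih =>
    have hrec := odeCoeff_add_three p₀ ha hb k
    rw [odePoly, sum_range_succ, ← odePoly, odePolyDeriv, sum_range_succ, ← odePolyDeriv]
    push_cast
    linear_combination (norm := (field_simp; ring)) ih - v ^ (k + 2) / (a * b) * hrec

end

/-- The constant `1/50` is small enough that `P 1 ≥ 0` still holds at `b = 2`. -/
noncomputable def superInit (b : ℝ) : ℝ := 1 - 1 / (50 * b ^ 2)

section
variable {b : ℝ}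

/- In the next three lemmas, after `b = t + 2` and clearing denominators, every coefficient of the
resulting polynomial in `t` is nonnegative. -/

theorem odeCoeff_eight_nonneg (hb : 2 ≤ b) : 0 ≤ odeCoeff (2 * b + 3) b (superInit b) 8 := by
  obtain ⟨t, ht, rfl⟩ : ∃ t ≥ 0, b = t + 2 := ⟨b - 2, by linarith, by ring⟩
  simp only [superInit, odeCoeff]
  push_cast
  field_simp
  ring_nf
  positivity

theorem odeCoeff_remainder_nonneg (hb : 2 ≤ b) :
    0 ≤ 8 * odeCoeff (2 * b + 3) b (superInit b) 8
      + (3 * b + 10) / ((2 * b + 3) * b) * odeCoeff (2 * b + 3) b (superInit b) 7 := by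
  obtain ⟨t, ht, rfl⟩ : ∃ t ≥ 0, b = t + 2 := ⟨b - 2, by linarith, by ring⟩
  simp only [superInit, odeCoeff]
  push_cast
  field_simp
  ring_nf
  positivity

theorem odePoly_one_nonneg (hb : 2 ≤ b) : 0 ≤ odePoly (2 * b + 3) b (superInit b) 7 1 := by
  obtain ⟨t, ht, rfl⟩ : ∃ t ≥ 0, b = t + 2 := ⟨b - 2, by linarith, by ring⟩
  simp only [odePoly, sum_range_succ, sum_range_zero, superInit, odeCoeff]
  push_cast
  field_simp
  ring_nf
  positivity

theorem odePoly_supersolution (hb : 2 ≤ b) {v : ℝ} (hv : v ∈ Icc (0 : ℝ) 1) :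
    1 + v / b ≤ (v / (2 * b + 3) + v / b) * odePoly (2 * b + 3) b (superInit b) 7 v
      - (1 - v / (2 * b + 3)) * (1 + v / b) * odePolyDeriv (2 * b + 3) b (superInit b) 7 v := by
  rw [← sub_nonneg, odePoly_residual _ (by positivity) (by positivity) 6 v]
  refine mul_nonneg (pow_nonneg hv.1 _) ?_
  have h8 := odeCoeff_eight_nonneg hb
  have h78 := odeCoeff_remainder_nonneg hb
  set c := odeCoeff (2 * b + 3) b (superInit b)
  have hconvex : ((6 : ℕ) + 2) * c 8 + (2 * b + 3 + b + (6 : ℕ) + 1) / ((2 * b + 3) * b) * c 7 * v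
      = (1 - v) * (8 * c 8) + v * (8 * c 8 + (3 * b + 10) / ((2 * b + 3) * b) * c 7) := by
    push_cast
    ring
  rw [hconvex]
  exact add_nonneg (mul_nonneg (sub_nonneg.2 hv.2) (by linarith)) (mul_nonneg hv.1 h78)

end

theorem integral_two_lt_one : ∫ v in (0 : ℝ)..1, (1 - v / 5) ^ 4 * (1 + v) < 1 := by
  have h : (fun v : ℝ => (1 - v / 5) ^ 4 * (1 + v)) =
      fun v => 1 + v / 5 - 14 / 25 * v ^ 2 + 26 / 125 * v ^ 3 - 19 / 625 * v ^ 4 + 1 / 625 * v ^ 5 := by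
    funext v
    ring
  rw [h]
  simp (disch := exact (by fun_prop : Continuous _).intervalIntegrable _ _) only
    [integral_add, integral_sub, integral_pow, integral_const_mul, integral_div]
  norm_num

/-- For every integer `s ≥ 2`,
`I_s = ∫_0^1 (1 - v/(2s+1))^{2s} (1 + v/(s-1))^{s-1} dv < 1`. -/
theorem Is_lt_one (s : ℕ) (hs : 2 ≤ s) :
    (∫ v in (0:ℝ)..1,
        (1 - v / (2 * (s : ℝ) + 1)) ^ (2 * s) * (1 + v / ((s : ℝ) - 1)) ^ (s - 1)) < 1 := by
  rcases hs.eq_or_lt with rfl | hs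
  · norm_num
    exact integral_two_lt_one
  set b : ℝ := s - 1
  have hb : 2 ≤ b := by
    have : (3 : ℝ) ≤ s := by exact_mod_cast hs
    linarith
  rw [show 2 * (s : ℝ) + 1 = 2 * b + 3 by ring, show s - 1 = s - 2 + 1 by omega]
  calc _ ≤ odePoly (2 * b + 3) b (superInit b) 7 0 :=
        integral_le_of_supersolution _ _ (2 * s) (s - 2) (by push_cast; ring)
          (by rw [Nat.cast_sub hs.le]; push_cast; ring) (hasDerivAt_odePoly _ 7)
          (fun v hv => odePoly_supersolution hb (Ioo_subset_Icc_self hv)) (odePoly_one_nonneg hb)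
    _ = superInit b := by simp [odePoly, sum_range_succ, odeCoeff]
    _ < 1 := by
      have : 0 < 1 / (50 * b ^ 2) := by positivity
      rw [superInit]
      linarith
end

section
/- For every integer s ≥ 1, the integral J_1 = ∫_{0}^{1} (1 − v/(2s+1))^{2s} (1 + v/s)^{s} dv satisfies J_1 ≥ 1 + 1/(12 (2s+1)²); in particular J_1 ≥ 1. -/
/-!
Write the integrand as `(1 + a)^s` with `a = (1 - v/(2s+1))² (1 + v/s) - 1 ≥ -1`. Bernoulli's
inequality bounds it below by `1 + s a`, which, because `1 - 2s/(2s+1) = 1/(2s+1)`, is the cubic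
`1 + v/D - (3s+2) v²/D² + v³/D²` with `D = 2s+1`. Its integral over `[0,1]` is exactly
`1 + 1/(12 D²)`.
-/

open intervalIntegral

theorem one_add_mul_le_sq_pow_mul_pow (n : ℕ) (x : ℝ) {y : ℝ} (hy : 0 ≤ 1 + y) :
    1 + n * ((1 - x) ^ 2 * (1 + y) - 1) ≤ (1 - x) ^ (2 * n) * (1 + y) ^ n := by
  have hbase : 0 ≤ (1 - x) ^ 2 * (1 + y) := by positivity
  calc 1 + n * ((1 - x) ^ 2 * (1 + y) - 1)
      ≤ (1 + ((1 - x) ^ 2 * (1 + y) - 1)) ^ n := one_add_mul_le_pow (by linarith) n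
    _ = (1 - x) ^ (2 * n) * (1 + y) ^ n := by rw [pow_mul, ← mul_pow]; ring

theorem cubic_le_integrand {s : ℕ} (hs : s ≠ 0) {v : ℝ} (hv : 0 ≤ v) :
    1 + v / (2 * s + 1) - (3 * s + 2) * v ^ 2 / (2 * s + 1) ^ 2 + v ^ 3 / (2 * s + 1) ^ 2
      ≤ (1 - v / (2 * s + 1)) ^ (2 * s) * (1 + v / s) ^ s := by
  have hbound := one_add_mul_le_sq_pow_mul_pow s (v / (2 * s + 1)) (y := v / s) (by positivity)
  convert hbound using 1
  field_simp
  ring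

theorem integral_cubic (D c : ℝ) :
    ∫ v in (0:ℝ)..1, (1 + v / D - c * v ^ 2 / D ^ 2 + v ^ 3 / D ^ 2)
      = 1 + 1 / (2 * D) - c / (3 * D ^ 2) + 1 / (4 * D ^ 2) := by
  rw [integral_add, integral_sub, integral_add]
  · simp [integral_div, integral_pow]
    ring
  all_goals apply Continuous.intervalIntegrable; fun_prop

/-- For every integer `s ≥ 1`,
`J_1 = ∫_0^1 (1 - v/(2s+1))^{2s} (1 + v/s)^s dv ≥ 1 + 1/(12(2s+1)²)`;
in particular `J_1 ≥ 1`. -/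
theorem J1_ge (s : ℕ) (hs : 1 ≤ s) :
    (∫ v in (0:ℝ)..1,
        (1 - v / (2 * (s : ℝ) + 1)) ^ (2 * s) * (1 + v / (s : ℝ)) ^ s)
        ≥ 1 + 1 / (12 * (2 * (s : ℝ) + 1) ^ 2) ∧
      (∫ v in (0:ℝ)..1,
        (1 - v / (2 * (s : ℝ) + 1)) ^ (2 * s) * (1 + v / (s : ℝ)) ^ s) ≥ 1 := by
  set D : ℝ := 2 * (s : ℝ) + 1 with hD
  have hlower : 1 + 1 / (12 * D ^ 2)
      ≤ ∫ v in (0:ℝ)..1, (1 - v / D) ^ (2 * s) * (1 + v / (s : ℝ)) ^ s := by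
    calc 1 + 1 / (12 * D ^ 2)
        = ∫ v in (0:ℝ)..1, (1 + v / D - (3 * s + 2) * v ^ 2 / D ^ 2 + v ^ 3 / D ^ 2) := by
          rw [integral_cubic, hD]
          field_simp
          ring
      _ ≤ _ := by
          apply integral_mono_on zero_le_one
          · apply Continuous.intervalIntegrable; fun_prop
          · apply Continuous.intervalIntegrable; fun_prop
          · exact fun v hv => cubic_le_integrand (by omega) hv.1
  have hgap : 0 < 1 / (12 * D ^ 2) := by positivity
  exact ⟨hlower, by linarith⟩
end

section
/- For every integer s ≥ 2, the integral H_1 = ∫_{0}^{1} (1 − v/(2s+2))^{2s+1} (1 + v/(s−1))^{s−1} dv satisfies H_1 < 1. -/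
/-!
By `log (1 - x) ≤ -x - x²/2` and `log (1 + y) ≤ y - y²/2 + y³/3`, the integrand is at most
`exp (a v - b v²)` with `a = 1/(2s+2)` and `b ≈ 3/(4s)`; then `eᵗ ≤ 1 + t + t²` and integration give
`H₁ ≤ 1 + a/2 - b/3 + a²/3 - ab/2 + b²/5`. The first-order terms cancel (`a/2 ≈ b/3 ≈ 1/(4s)`),
and the remainder is `-N(s) / (2880 (s+1)⁴ (s-1)⁴)` with `N` a sextic that is positive for `s ≥ 3`.
For `s = 2` this estimate is too weak, and the integral of the degree-6 polynomial is computed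
exactly.
-/

open Real Set

lemma log_one_sub_le {x : ℝ} (h0 : 0 ≤ x) (h1 : x < 1) : log (1 - x) ≤ -x - x ^ 2 / 2 := by
  have hsum := hasSum_pow_div_log_of_abs_lt_one (abs_lt.2 ⟨by linarith, h1⟩)
  have := sum_le_hasSum (Finset.range 2) (fun i _ => by positivity) hsum
  norm_num [Finset.sum_range_succ] at this
  linarith

lemma log_one_add_le {y : ℝ} (hy : 0 ≤ y) : log (1 + y) ≤ y - y ^ 2 / 2 + y ^ 3 / 3 := by
  let F : ℝ → ℝ := fun u => u - u ^ 2 / 2 + u ^ 3 / 3 - log (1 + u)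
  have hF : ∀ u ∈ Ici (0 : ℝ), HasDerivAt F (u ^ 3 / (1 + u)) u := by
    intro u hu
    have hu1 : 1 + u ≠ 0 := by have : (0 : ℝ) ≤ u := hu; positivity
    refine ((((hasDerivAt_id' u).sub ((hasDerivAt_pow 2 u).div_const 2)).add
      ((hasDerivAt_pow 3 u).div_const 3)).sub
        (((hasDerivAt_id' u).const_add 1).log hu1)).congr_deriv ?_
    field_simp
    ring
  have hmono : MonotoneOn F (Ici 0) :=
    monotoneOn_of_hasDerivWithinAt_nonneg (convex_Ici 0)
      (fun u hu => (hF u hu).continuousAt.continuousWithinAt)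
      (fun u hu => (hF u (interior_subset hu)).hasDerivWithinAt)
      (fun u hu => by rw [interior_Ici] at hu; have : (0 : ℝ) < u := hu; positivity)
  have := hmono self_mem_Ici hy hy
  simp [F] at this
  linarith

lemma exp_le_one_add_add_sq {t : ℝ} (ht : |t| ≤ 1) : exp t ≤ 1 + t + t ^ 2 := by
  linarith [(abs_le.1 (abs_exp_sub_one_sub_id_le ht)).2]

lemma integral_one_add_add_sq_quadratic (a b : ℝ) :
    ∫ v in (0 : ℝ)..1, (1 + (a * v - b * v ^ 2) + (a * v - b * v ^ 2) ^ 2)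
      = 1 + a / 2 - b / 3 + a ^ 2 / 3 - a * b / 2 + b ^ 2 / 5 := by
  -- `v ^ 1` keeps the linear term in the shape `integral_pow` matches
  have hexpand : ∀ v : ℝ, 1 + (a * v - b * v ^ 2) + (a * v - b * v ^ 2) ^ 2
      = 1 + a * v ^ 1 + (a ^ 2 - b) * v ^ 2 - 2 * a * b * v ^ 3 + b ^ 2 * v ^ 4 := by
    intro v; ring
  simp_rw [hexpand]
  rw [intervalIntegral.integral_add, intervalIntegral.integral_sub, intervalIntegral.integral_add,
    intervalIntegral.integral_add]
  · simp only [intervalIntegral.integral_const_mul, integral_pow, intervalIntegral.integral_const]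
    norm_num
    ring
  all_goals exact Continuous.intervalIntegrable (by fun_prop) _ _

lemma integral_exp_quadratic_le {a b : ℝ} (ha0 : 0 ≤ a) (ha1 : a ≤ 1) (hb0 : 0 ≤ b) (hb1 : b ≤ 1) :
    ∫ v in (0 : ℝ)..1, exp (a * v - b * v ^ 2)
      ≤ 1 + a / 2 - b / 3 + a ^ 2 / 3 - a * b / 2 + b ^ 2 / 5 := by
  rw [← integral_one_add_add_sq_quadratic]
  refine intervalIntegral.integral_mono_on zero_le_one
    (Continuous.intervalIntegrable (by fun_prop) _ _)
    (Continuous.intervalIntegrable (by fun_prop) _ _) fun v ⟨hv0, hv1⟩ => ?_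
  apply exp_le_one_add_add_sq
  rw [abs_le]
  constructor <;> nlinarith [mul_nonneg ha0 hv0, mul_nonneg hb0 (sq_nonneg v)]

namespace H1

noncomputable def lin (X : ℝ) : ℝ := 1 / (2 * X + 2)

/-- The `v²`-coefficient: `(2X+1)/(2(2X+2)²)` from `log (1 - v/(2X+2))`, and
`1/(2(X-1)) - 1/(3(X-1)²)` from `log (1 + v/(X-1))` once its cubic term is bounded via `v³ ≤ v²`. -/
noncomputable def quad (X : ℝ) : ℝ := (2 * X + 1) / (2 * (2 * X + 2) ^ 2) + (3 * X - 5) / (6 * (X - 1) ^ 2)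

lemma exponent_le {X v : ℝ} (hX : 1 < X) (hv0 : 0 ≤ v) (hv1 : v ≤ 1) :
    (2 * X + 1) * log (1 - v / (2 * X + 2)) + (X - 1) * log (1 + v / (X - 1))
      ≤ lin X * v - quad X * v ^ 2 := by
  have hc : 0 < 2 * X + 2 := by linarith
  have hd : 0 < X - 1 := by linarith
  have h1 := log_one_sub_le (x := v / (2 * X + 2)) (by positivity)
    (by rw [div_lt_one hc]; linarith)
  have h2 := log_one_add_le (y := v / (X - 1)) (by positivity)
  have hcubic : 0 ≤ (v ^ 2 - v ^ 3) / (3 * (X - 1) ^ 2) :=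
    div_nonneg (by nlinarith) (by positivity)
  have hid : lin X * v - quad X * v ^ 2 - (v ^ 2 - v ^ 3) / (3 * (X - 1) ^ 2)
      = (2 * X + 1) * (-(v / (2 * X + 2)) - (v / (2 * X + 2)) ^ 2 / 2)
        + (X - 1) * (v / (X - 1) - (v / (X - 1)) ^ 2 / 2 + (v / (X - 1)) ^ 3 / 3) := by
    unfold lin quad
    field_simp
    ring
  linarith [mul_le_mul_of_nonneg_left h1 (by linarith : 0 ≤ 2 * X + 1),
    mul_le_mul_of_nonneg_left h2 hd.le]

lemma integrand_le_exp {s : ℕ} (hs : 2 ≤ s) {v : ℝ} (hv0 : 0 ≤ v) (hv1 : v ≤ 1) :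
    (1 - v / (2 * (s : ℝ) + 2)) ^ (2 * s + 1) * (1 + v / ((s : ℝ) - 1)) ^ (s - 1)
      ≤ exp (lin s * v - quad s * v ^ 2) := by
  have hX : (1 : ℝ) < s := by exact_mod_cast hs
  have hpow : ∀ {z : ℝ} (n : ℕ), 0 < z → z ^ n = exp (n * log z) := fun n hz => by
    rw [exp_nat_mul, exp_log hz]
  rw [hpow _ (by rw [sub_pos, div_lt_one (by linarith)]; linarith),
    hpow _ (by have : (0 : ℝ) < s - 1 := (by linarith); positivity), ← exp_add, exp_le_exp]
  push_cast [show 1 ≤ s by omega]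
  exact exponent_le hX hv0 hv1

lemma lin_nonneg {X : ℝ} (hX : 0 ≤ X) : 0 ≤ lin X := by unfold lin; positivity

lemma lin_le_one {X : ℝ} (hX : 0 ≤ X) : lin X ≤ 1 := by
  unfold lin; rw [div_le_one (by linarith)]; linarith

lemma quad_nonneg {X : ℝ} (hX : 3 ≤ X) : 0 ≤ quad X := by
  unfold quad; have : 0 ≤ 3 * X - 5 := by linarith
  positivity

lemma quad_le_one {X : ℝ} (hX : 3 ≤ X) : quad X ≤ 1 := by
  unfold quad
  have h1 : (2 * X + 1) / (2 * (2 * X + 2) ^ 2) ≤ 1 / 2 := by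
    rw [div_le_div_iff₀ (by positivity) (by norm_num)]; nlinarith
  have h2 : (3 * X - 5) / (6 * (X - 1) ^ 2) ≤ 1 / 2 := by
    rw [div_le_div_iff₀ (by nlinarith) (by norm_num)]; nlinarith
  linarith

lemma second_order_neg {X : ℝ} (hX : 3 ≤ X) :
    lin X / 2 - quad X / 3 + lin X ^ 2 / 3 - lin X * quad X / 2 + quad X ^ 2 / 5 < 0 := by
  have hd : 0 < X - 1 := by linarith
  have hid : lin X / 2 - quad X / 3 + lin X ^ 2 / 3 - lin X * quad X / 2 + quad X ^ 2 / 5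
      = -(496 * X ^ 6 - 430 * X ^ 5 - 2447 * X ^ 4 + 1192 * X ^ 3 + 3806 * X ^ 2 - 1202 * X - 2439)
        / (2880 * (X + 1) ^ 4 * (X - 1) ^ 4) := by
    unfold lin quad
    field_simp
    ring
  rw [hid, neg_div, neg_lt_zero]
  apply div_pos _ (by positivity)
  -- all coefficients of the numerator in powers of `X - 3` are positive
  have hu : 0 ≤ X - 3 := by linarith
  nlinarith [pow_nonneg hu 2, pow_nonneg hu 3, pow_nonneg hu 4, pow_nonneg hu 5, pow_nonneg hu 6]

lemma integral_at_two_lt_one : ∫ v in (0 : ℝ)..1, (1 - v / 6) ^ 5 * (1 + v) < 1 := by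
  have hexpand : ∀ v : ℝ, (1 - v / 6) ^ 5 * (1 + v) = 1 + 1 / 6 * v ^ 1 - 5 / 9 * v ^ 2
      + 25 / 108 * v ^ 3 - 55 / 1296 * v ^ 4 + 29 / 7776 * v ^ 5 - 1 / 7776 * v ^ 6 := by
    intro v; ring
  simp_rw [hexpand]
  rw [intervalIntegral.integral_sub, intervalIntegral.integral_add, intervalIntegral.integral_sub,
    intervalIntegral.integral_add, intervalIntegral.integral_sub, intervalIntegral.integral_add]
  · simp only [intervalIntegral.integral_const_mul, integral_pow, intervalIntegral.integral_const]
    norm_num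
  all_goals exact Continuous.intervalIntegrable (by fun_prop) _ _

end H1

/-- For every integer `s ≥ 2`,
`H_1 = ∫_0^1 (1 - v/(2s+2))^{2s+1} (1 + v/(s-1))^{s-1} dv < 1`. -/
theorem H1_lt_one (s : ℕ) (hs : 2 ≤ s) :
    (∫ v in (0:ℝ)..1,
        (1 - v / (2 * (s : ℝ) + 2)) ^ (2 * s + 1) * (1 + v / ((s : ℝ) - 1)) ^ (s - 1)) < 1 := by
  rcases hs.eq_or_lt with rfl | hs3
  · norm_num
    exact H1.integral_at_two_lt_one
  have hX : (3 : ℝ) ≤ s := by exact_mod_cast hs3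
  calc _ ≤ ∫ v in (0 : ℝ)..1, exp (H1.lin s * v - H1.quad s * v ^ 2) :=
        intervalIntegral.integral_mono_on zero_le_one
          (Continuous.intervalIntegrable (by fun_prop) _ _)
          (Continuous.intervalIntegrable (by fun_prop) _ _)
          fun v ⟨hv0, hv1⟩ => H1.integrand_le_exp hs hv0 hv1
    _ ≤ _ := integral_exp_quadratic_le (H1.lin_nonneg (by linarith)) (H1.lin_le_one (by linarith))
        (H1.quad_nonneg hX) (H1.quad_le_one hX)
    _ < 1 := by linarith [H1.second_order_neg hX]
end

section
/- For every integer s ≥ 2, the integral I_s = ∫_{0}^{1} (1 − v/(2s+1))^{2s} (1 + v/(s−1))^{s−1} dv satisfies I_s < 1 + (1 + 3s(−11s³ + (s+4)²)) / ((s−1)⁴ (2s+1)⁶) + s⁶ (29 + 7s − 15s²/2) / ((s−1)⁴ (2s+1)⁶). -/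
open Real Set

/-!
Write the integrand as `B ^ (s - 1) * (1 - v / (2s+1)) ^ 2` with
`B = (1 - v / (2s+1)) ^ 2 * (1 + v / (s-1))`. Since `B ≤ exp (B - 1)`, the power is at most
`exp x` with `x = (s-1)(B-1)`, which is a cubic polynomial in `v` taking values in `[0, 1]` on
`[0, 1]`; there `exp x ≤ 1 + x + x²/2 + 2x³/9` (Taylor with remainder). This polynomial majorant
is integrated exactly, and the bound exceeds its integral by a rational function of `s` whose
numerator, written in `s - 2`, has positive coefficients.
-/

theorem pow_le_exp_mul_sub_one {x : ℝ} (hx : 0 ≤ x) (n : ℕ) : x ^ n ≤ exp (n * (x - 1)) := by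
  calc x ^ n ≤ exp (x - 1) ^ n := by
        gcongr
        linarith [add_one_le_exp (x - 1)]
    _ = exp (n * (x - 1)) := (exp_nat_mul _ _).symm

noncomputable def expMajorant (x : ℝ) : ℝ := 1 + x + x ^ 2 / 2 + 2 / 9 * x ^ 3

theorem exp_le_expMajorant {x : ℝ} (h₀ : 0 ≤ x) (h₁ : x ≤ 1) : exp x ≤ expMajorant x := by
  have := exp_bound' h₀ h₁ (n := 3) (by norm_num)
  norm_num [Finset.sum_range_succ, Nat.factorial] at this
  unfold expMajorant
  linarith

noncomputable def integrandExponent (s v : ℝ) : ℝ :=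
  (3 * (2 * s + 1) * v + (s - 1 - 2 * (2 * s + 1)) * v ^ 2 + v ^ 3) / (2 * s + 1) ^ 2

theorem integrandExponent_eq {s v : ℝ} (hs : 1 < s) :
    integrandExponent s v = (s - 1) * ((1 - v / (2 * s + 1)) ^ 2 * (1 + v / (s - 1)) - 1) := by
  have : s - 1 ≠ 0 := by linarith
  have : 2 * s + 1 ≠ 0 := by linarith
  unfold integrandExponent
  field_simp
  ring

theorem integrandExponent_nonneg {s v : ℝ} (hs : 1 ≤ s) (hv : v ∈ Icc (0 : ℝ) 1) :
    0 ≤ integrandExponent s v := by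
  obtain ⟨hv₀, hv₁⟩ := hv
  unfold integrandExponent
  apply div_nonneg _ (by positivity)
  nlinarith [mul_nonneg hv₀ (sub_nonneg.2 hv₁), mul_nonneg (mul_nonneg hv₀ hv₀) (sub_nonneg.2 hs)]

theorem integrandExponent_le_one {s v : ℝ} (hs : 1 ≤ s) (hv : v ∈ Icc (0 : ℝ) 1) :
    integrandExponent s v ≤ 1 := by
  obtain ⟨hv₀, hv₁⟩ := hv
  unfold integrandExponent
  rw [div_le_one (by positivity)]
  nlinarith [mul_nonneg hv₀ (sub_nonneg.2 hv₁), mul_nonneg (mul_nonneg hv₀ hv₀) (sub_nonneg.2 hs)]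

noncomputable def integrandMajorant (s v : ℝ) : ℝ :=
  (1 - v / (2 * s + 1)) ^ 2 * expMajorant (integrandExponent s v)

theorem continuous_integrandMajorant (s : ℝ) : Continuous (integrandMajorant s) := by
  unfold integrandMajorant expMajorant integrandExponent
  fun_prop

theorem integrand_le_integrandMajorant {s : ℕ} (hs : 2 ≤ s) {v : ℝ} (hv : v ∈ Icc (0 : ℝ) 1) :
    (1 - v / (2 * (s : ℝ) + 1)) ^ (2 * s) * (1 + v / ((s : ℝ) - 1)) ^ (s - 1) ≤
      integrandMajorant s v := by
  have hs' : (1 : ℝ) < s := by exact_mod_cast hs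
  set B := (1 - v / (2 * (s : ℝ) + 1)) ^ 2 * (1 + v / ((s : ℝ) - 1)) with hB
  have hB₀ : 0 ≤ B := by
    have : 0 ≤ v / ((s : ℝ) - 1) := div_nonneg hv.1 (by linarith)
    positivity
  have hexponent : ((s - 1 : ℕ) : ℝ) * (B - 1) = integrandExponent s v := by
    rw [integrandExponent_eq hs', Nat.cast_sub (by omega), Nat.cast_one]
  calc (1 - v / (2 * (s : ℝ) + 1)) ^ (2 * s) * (1 + v / ((s : ℝ) - 1)) ^ (s - 1)
      = B ^ (s - 1) * (1 - v / (2 * (s : ℝ) + 1)) ^ 2 := by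
        rw [show 2 * s = 2 * (s - 1) + 2 by omega, pow_add, pow_mul, hB, mul_pow]
        ring
    _ ≤ exp (integrandExponent s v) * (1 - v / (2 * (s : ℝ) + 1)) ^ 2 := by
        rw [← hexponent]
        gcongr
        exact pow_le_exp_mul_sub_one hB₀ _
    _ ≤ integrandMajorant s v := by
        rw [integrandMajorant, mul_comm]
        gcongr
        exact exp_le_expMajorant (integrandExponent_nonneg hs'.le hv)
          (integrandExponent_le_one hs'.le hv)

set_option maxHeartbeats 1000000 in
theorem integral_integrandMajorant_lt {s : ℕ} (hs : 2 ≤ s) :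
    ∫ v in (0:ℝ)..1, integrandMajorant s v <
      1 + (1 + 3 * (s : ℝ) * (-11 * (s : ℝ) ^ 3 + ((s : ℝ) + 4) ^ 2)) /
            (((s : ℝ) - 1) ^ 4 * (2 * (s : ℝ) + 1) ^ 6) +
        (s : ℝ) ^ 6 * (29 + 7 * (s : ℝ) - 15 * (s : ℝ) ^ 2 / 2) /
            (((s : ℝ) - 1) ^ 4 * (2 * (s : ℝ) + 1) ^ 6) := by
  obtain ⟨m, rfl⟩ : ∃ m, s = m + 2 := ⟨s - 2, by omega⟩
  push_cast
  have hexponent : ∀ v, integrandExponent ((m : ℝ) + 2) v =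
      3 / (2 * ((m : ℝ) + 2) + 1) * v +
      ((m : ℝ) + 2 - 1 - 2 * (2 * ((m : ℝ) + 2) + 1)) / (2 * ((m : ℝ) + 2) + 1) ^ 2 * v ^ 2 +
      1 / (2 * ((m : ℝ) + 2) + 1) ^ 2 * v ^ 3 := fun v => by
    have : 2 * ((m : ℝ) + 2) + 1 ≠ 0 := by positivity
    unfold integrandExponent
    field_simp
  simp only [integrandMajorant, expMajorant, hexponent]
  generalize hα : 3 / (2 * ((m : ℝ) + 2) + 1) = α
  generalize hβ : ((m : ℝ) + 2 - 1 - 2 * (2 * ((m : ℝ) + 2) + 1)) / (2 * ((m : ℝ) + 2) + 1) ^ 2 = β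
  generalize hγ : 1 / (2 * ((m : ℝ) + 2) + 1) ^ 2 = γ
  simp only [div_eq_mul_inv (b := 2 * ((m : ℝ) + 2) + 1)]
  generalize hδ : (2 * ((m : ℝ) + 2) + 1)⁻¹ = δ
  -- with the coefficients as atoms the expanded integrand has only a few dozen monomials
  ring_nf
  simp (disch := exact (by fun_prop : Continuous _).intervalIntegrable _ _) only
    [intervalIntegral.integral_add, intervalIntegral.integral_sub, intervalIntegral.integral_mul_const,
      integral_pow, integral_id, intervalIntegral.integral_const]
  subst hδ hα hβ hγ
  rw [← sub_pos]
  field_simp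
  ring_nf
  positivity

/-- For every integer `s ≥ 2`,
`I_s = ∫_0^1 (1 - v/(2s+1))^{2s} (1 + v/(s-1))^{s-1} dv` satisfies
`I_s < 1 + (1 + 3s(-11s³ + (s+4)²))/((s-1)⁴(2s+1)⁶) + s⁶(29 + 7s - 15s²/2)/((s-1)⁴(2s+1)⁶)`. -/
theorem Is_lt_bound (s : ℕ) (hs : 2 ≤ s) :
    (∫ v in (0:ℝ)..1,
        (1 - v / (2 * (s : ℝ) + 1)) ^ (2 * s) * (1 + v / ((s : ℝ) - 1)) ^ (s - 1)) <
      1 + (1 + 3 * (s : ℝ) * (-11 * (s : ℝ) ^ 3 + ((s : ℝ) + 4) ^ 2)) /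
            (((s : ℝ) - 1) ^ 4 * (2 * (s : ℝ) + 1) ^ 6) +
        (s : ℝ) ^ 6 * (29 + 7 * (s : ℝ) - 15 * (s : ℝ) ^ 2 / 2) /
            (((s : ℝ) - 1) ^ 4 * (2 * (s : ℝ) + 1) ^ 6) := by
  calc _ ≤ ∫ v in (0:ℝ)..1, integrandMajorant s v :=
        intervalIntegral.integral_mono_on zero_le_one
          ((by fun_prop : Continuous _).intervalIntegrable _ _)
          ((continuous_integrandMajorant s).intervalIntegrable _ _)
          fun v hv => integrand_le_integrandMajorant hs hv
    _ < _ := integral_integrandMajorant_lt hs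
end
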